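/- For the Undecided-State Dynamics, suppose the current color configuration c satisfies c_1 ≥ (1+α)·c_i for some constant α > 0 and every color i ≠ 1, and set γ = (1+α)^{-1}. Then E[C_1' + 2Q' | c] ≥ n·(1 + Γ(c)), where Γ(c) = (1 − (c_1 + 2q)/n)² + 2(1−γ)·(R(c) − 1)·(c_1/n)². -/

import Mathlib

open Finset

/-- A state of the Undecided-State Dynamics: each of the `n` nodes is either
undecided (`none`) or supports one of `k` colors. -/
abbrev Config (n k : ℕ) := Fin n → Option (Fin k)

/-- Number of nodes supporting color `i`. -/
def colorCount {n k : ℕ} (σ : Config n k) (i : Fin k) : ℕ :=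
  (Finset.univ.filter fun v => σ v = some i).card

/-- Number of undecided nodes. -/
def undecidedCount {n k : ℕ} (σ : Config n k) : ℕ :=
  (Finset.univ.filter fun v => σ v = none).card

/-- Update rule for one node: an undecided node adopts the sampled state; a colored
node keeps its color iff the sampled node does not support a different color. -/
def updateNode {k : ℕ} : Option (Fin k) → Option (Fin k) → Option (Fin k)
  | none, s => s
  | some c, none => some c
  | some c, some c' => if c' = c then some c else none

/-- Apply one synchronous round given the samples `s` of all nodes. -/
def applySample {n k : ℕ} (σ : Config n k) (s : Fin n → Fin n) : Config n k :=
  fun v => updateNode (σ v) (σ (s v))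

/-- One round of the Undecided-State Dynamics: every node independently samples a
uniformly random node. -/
noncomputable def step {n k : ℕ} [NeZero n] (σ : Config n k) : PMF (Config n k) :=
  (PMF.uniformOfFintype (Fin n → Fin n)).map (applySample σ)

/-- Distribution of the configuration after `t` rounds, starting from `σ`. -/
noncomputable def process {n k : ℕ} [NeZero n] (σ : Config n k) : ℕ → PMF (Config n k)
  | 0 => PMF.pure σ
  | t + 1 => (process σ t).bind step

/-- Joint distribution of the whole trajectory of the first `t` rounds (most recent
configuration first). -/
noncomputable def pathProcess {n k : ℕ} [NeZero n] (σ : Config n k) :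
    ℕ → PMF (List (Config n k))
  | 0 => PMF.pure [σ]
  | t + 1 => (pathProcess σ t).bind fun l => (step l.headI).map fun τ => τ :: l

/-- Probability of an event under a PMF. -/
noncomputable def pr {α : Type*} (p : PMF α) (E : Set α) : ENNReal := p.toOuterMeasure E

/-- Expected value of `f` after one round of the dynamics starting from `σ`. -/
noncomputable def expv {n k : ℕ} [NeZero n] (σ : Config n k) (f : Config n k → ℝ) : ℝ :=
  ∑ τ : Config n k, ((step σ) τ).toReal * f τ

/-- Size `c₁` of the plurality (largest) color class. -/
def plur {n k : ℕ} (σ : Config n k) : ℕ := Finset.univ.sup (colorCount σ)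

/-- Monochromatic distance `md(c) = ∑ᵢ (cᵢ/c₁)²`. -/
noncomputable def md {n k : ℕ} (σ : Config n k) : ℝ :=
  ∑ i : Fin k, ((colorCount σ i : ℝ) / (plur σ : ℝ)) ^ 2

/-- `R(c) = (∑ᵢ cᵢ)/c₁ = (n − q)/c₁`. -/
noncomputable def Rval {n k : ℕ} (σ : Config n k) : ℝ :=
  ((n : ℝ) - (undecidedCount σ : ℝ)) / (plur σ : ℝ)

/-- The process has converged: all `n` nodes support one and the same color. -/
def mono {n k : ℕ} (σ : Config n k) : Prop := ∃ i : Fin k, ∀ v : Fin n, σ v = some i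

/-!
Averaging over the uniformly random samples, `n · E[C₁' + 2Q']` is the sum over ordered pairs of
nodes `(v, w)` of the weight (`1` for color `1`, `2` for undecided) of the state `v` takes after
sampling `w`. Grouping the pairs by their states gives
`n · E[C₁' + 2Q'] = 2q² + 2qc₁ + c₁² + 2S² − 2∑ᵢ cᵢ²` with `S = ∑ᵢ cᵢ = n − q`. Subtracting
`n²(1 + Γ(c))` leaves `2(γc₁S + (1 − γ)c₁² − ∑ᵢ cᵢ²)`, which is nonnegative because every
minority color has `cᵢ ≤ γc₁`.
-/

theorem PMF.sum_map_toReal_mul {α β : Type*} [Fintype α] [Fintype β] (p : PMF α) (g : α → β)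
    (f : β → ℝ) : ∑ b, ((p.map g) b).toReal * f b = ∑ a, (p a).toReal * f (g a) := by
  classical
  rw [← Finset.sum_fiberwise Finset.univ g]
  refine Finset.sum_congr rfl fun b _ => ?_
  rw [PMF.map_apply, tsum_fintype, ENNReal.toReal_sum fun a _ => by split <;> simp [p.apply_ne_top],
    Finset.sum_mul, Finset.sum_filter]
  refine Finset.sum_congr rfl fun a _ => ?_
  obtain rfl | h := eq_or_ne b (g a)
  · simp
  · simp [h, h.symm]

theorem Fintype.sum_comp_eval {α β M : Type*} [Fintype α] [DecidableEq α] [Fintype β]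
    [AddCommMonoid M] (a : α) (h : β → M) :
    ∑ s : α → β, h (s a) = Fintype.card β ^ (Fintype.card α - 1) • ∑ b, h b := by
  rw [← Fintype.sum_equiv (Equiv.funSplitAt a β).symm (fun p => h p.1) _ (fun p => by simp),
    Fintype.sum_prod_type]
  simp [Finset.sum_const, Fintype.card_subtype_compl, Finset.smul_sum]

theorem Fintype.sum_comp_eq_sum_card_fiber_mul {α β : Type*} [Fintype α] [Fintype β]
    [DecidableEq β] (σ : α → β) (F : β → ℝ) :
    ∑ a, F (σ a) = ∑ b, (#{a | σ a = b} : ℝ) * F b := by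
  rw [← Finset.sum_fiberwise Finset.univ σ]
  refine Finset.sum_congr rfl fun b _ => ?_
  rw [Finset.sum_congr rfl fun a ha => by rw [(Finset.mem_filter.1 ha).2], Finset.sum_const,
    nsmul_eq_mul]

theorem sum_sq_le_of_le_mul {ι : Type*} [Fintype ι] (c : ι → ℝ) (i₁ : ι) {γ : ℝ}
    (hc : ∀ i, 0 ≤ c i) (hle : ∀ i ≠ i₁, c i ≤ γ * c i₁) :
    ∑ i, c i ^ 2 ≤ γ * c i₁ * ∑ i, c i + (1 - γ) * c i₁ ^ 2 := by
  classical
  have hrest : ∑ i ∈ {i₁}ᶜ, c i ^ 2 ≤ γ * c i₁ * ∑ i ∈ {i₁}ᶜ, c i := by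
    rw [Finset.mul_sum]
    refine Finset.sum_le_sum fun i hi => ?_
    rw [sq]
    exact mul_le_mul_of_nonneg_right (hle i (by simpa using hi)) (hc i)
  rw [Fintype.sum_eq_add_sum_compl i₁, Fintype.sum_eq_add_sum_compl i₁ c]
  nlinarith

section

variable {n k : ℕ}

def stateCount (σ : Config n k) (o : Option (Fin k)) : ℕ := #{v | σ v = o}

@[simp] theorem stateCount_none (σ : Config n k) :
    stateCount σ none = undecidedCount σ := rfl

@[simp] theorem stateCount_some (σ : Config n k) (i : Fin k) :
    stateCount σ (some i) = colorCount σ i := rfl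

theorem sum_comp_eq_sum_stateCount_mul (σ : Config n k) (F : Option (Fin k) → ℝ) :
    ∑ v, F (σ v) = ∑ o, (stateCount σ o : ℝ) * F o :=
  Fintype.sum_comp_eq_sum_card_fiber_mul σ F

theorem expv_eq_average [NeZero n] (σ : Config n k) (f : Config n k → ℝ) :
    expv σ f = ((n : ℝ) ^ n)⁻¹ * ∑ s : Fin n → Fin n, f (applySample σ s) := by
  rw [expv, step, PMF.sum_map_toReal_mul, Finset.mul_sum]
  simp

theorem expv_sum_comp [NeZero n] (σ : Config n k) (g : Option (Fin k) → ℝ) :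
    expv σ (fun τ => ∑ v, g (τ v)) = (n : ℝ)⁻¹ * ∑ v, ∑ w, g (updateNode (σ v) (σ w)) := by
  have hpow : ((n : ℝ) ^ n)⁻¹ * (n : ℝ) ^ (n - 1) = (n : ℝ)⁻¹ := by
    rw [← mul_pow_sub_one (NeZero.ne n), mul_inv, mul_assoc,
      inv_mul_cancel₀ (pow_ne_zero _ (Nat.cast_ne_zero.2 (NeZero.ne n))), mul_one]
  rw [expv_eq_average, Finset.sum_comm]
  simp only [applySample, fun v => Fintype.sum_comp_eval v fun w => g (updateNode (σ v) (σ w)),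
    Fintype.card_fin, nsmul_eq_mul, ← Finset.mul_sum, ← mul_assoc]
  push_cast
  rw [hpow]

def majorityWeight (i₁ : Fin k) : Option (Fin k) → ℝ
  | none => 2
  | some i => if i = i₁ then 1 else 0

theorem sum_majorityWeight (σ : Config n k) (i₁ : Fin k) :
    ∑ v, majorityWeight i₁ (σ v) = colorCount σ i₁ + 2 * undecidedCount σ := by
  rw [sum_comp_eq_sum_stateCount_mul]
  simp [Fintype.sum_option, majorityWeight]
  ring

theorem sum_sum_comp_eq_sum_sum_stateCount_mul (σ : Config n k)
    (G : Option (Fin k) → Option (Fin k) → ℝ) :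
    ∑ v, ∑ w, G (σ v) (σ w) = ∑ a, ∑ b, (stateCount σ a : ℝ) * stateCount σ b * G a b := by
  rw [sum_comp_eq_sum_stateCount_mul σ fun a => ∑ w, G a (σ w)]
  refine Finset.sum_congr rfl fun a _ => ?_
  rw [sum_comp_eq_sum_stateCount_mul σ (G a), Finset.mul_sum]
  simp only [mul_assoc]

theorem sum_sum_majorityWeight_updateNode (σ : Config n k) (i₁ : Fin k) :
    ∑ v, ∑ w, majorityWeight i₁ (updateNode (σ v) (σ w)) =
      2 * (undecidedCount σ : ℝ) ^ 2 + 2 * undecidedCount σ * colorCount σ i₁ +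
        (colorCount σ i₁ : ℝ) ^ 2 + 2 * (∑ i, (colorCount σ i : ℝ)) ^ 2 -
        2 * ∑ i, (colorCount σ i : ℝ) ^ 2 := by
  -- isolates the pairs of equal colors, the only ones where `updateNode` does not give `none`
  have hsplit : ∀ (i j : Fin k) (x : ℝ),
      (if j = i then x else 2) = 2 + if j = i then x - 2 else 0 := fun i j x => by
    split_ifs <;> ring
  rw [sum_sum_comp_eq_sum_sum_stateCount_mul σ fun a b => majorityWeight i₁ (updateNode a b)]
  simp only [Fintype.sum_option, updateNode, apply_ite (majorityWeight i₁)]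
  simp only [majorityWeight, hsplit, stateCount_none, stateCount_some, mul_add, mul_sub, mul_ite,
    mul_zero, mul_one, Finset.sum_add_distrib, Finset.sum_sub_distrib, Finset.sum_ite_eq',
    Finset.mem_univ, if_true, ← Finset.mul_sum, ← Finset.sum_mul, sq]
  ring

theorem expv_colorCount_add_two_mul_undecidedCount [NeZero n] (σ : Config n k) (i₁ : Fin k) :
    expv σ (fun τ => (colorCount τ i₁ : ℝ) + 2 * undecidedCount τ) =
      (n : ℝ)⁻¹ * (2 * (undecidedCount σ : ℝ) ^ 2 + 2 * undecidedCount σ * colorCount σ i₁ +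
        (colorCount σ i₁ : ℝ) ^ 2 + 2 * (∑ i, (colorCount σ i : ℝ)) ^ 2 -
        2 * ∑ i, (colorCount σ i : ℝ) ^ 2) := by
  simp_rw [← sum_majorityWeight]
  rw [expv_sum_comp, sum_sum_majorityWeight_updateNode]

theorem plur_eq_colorCount (σ : Config n k) {i₁ : Fin k}
    (h : ∀ i, colorCount σ i ≤ colorCount σ i₁) : plur σ = colorCount σ i₁ :=
  le_antisymm (Finset.sup_le fun i _ => h i) (Finset.le_sup (Finset.mem_univ i₁))

theorem undecidedCount_add_sum_colorCount (σ : Config n k) :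
    (undecidedCount σ : ℝ) + ∑ i, (colorCount σ i : ℝ) = n := by
  simpa [Fintype.sum_option] using (sum_comp_eq_sum_stateCount_mul σ fun _ => 1).symm

end

theorem drift_inequality_of_sum_sq_le {q S c₁ T γ R : ℝ} (hn : 0 < q + S) (hR : R = S / c₁)
    (hT : T ≤ γ * c₁ * S + (1 - γ) * c₁ ^ 2) :
    (q + S) * (1 + ((1 - (c₁ + 2 * q) / (q + S)) ^ 2 + 2 * (1 - γ) * (R - 1) * (c₁ / (q + S)) ^ 2))
      ≤ (q + S)⁻¹ * (2 * q ^ 2 + 2 * q * c₁ + c₁ ^ 2 + 2 * S ^ 2 - 2 * T) := by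
  -- also when `c₁ = 0`, where `R = S / 0 = 0`
  have hRc : (R - 1) * c₁ ^ 2 = (S - c₁) * c₁ := by
    rcases eq_or_ne c₁ 0 with rfl | hc
    · simp
    · rw [hR]; field_simp
  have hgap : (q + S)⁻¹ * (2 * q ^ 2 + 2 * q * c₁ + c₁ ^ 2 + 2 * S ^ 2 - 2 * T)
      - (q + S) * (1 + ((1 - (c₁ + 2 * q) / (q + S)) ^ 2
        + 2 * (1 - γ) * (R - 1) * (c₁ / (q + S)) ^ 2))
      = 2 * (γ * c₁ * S + (1 - γ) * c₁ ^ 2 - T) / (q + S) := by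
    rw [mul_assoc _ (R - 1), div_pow, ← mul_div_assoc, hRc]
    field_simp
    ring
  have : 0 ≤ 2 * (γ * c₁ * S + (1 - γ) * c₁ ^ 2 - T) / (q + S) := by
    apply div_nonneg <;> linarith
  linarith

/-- If the current configuration satisfies `c₁ ≥ (1+α) cᵢ` for some
constant `α > 0` and every color `i ≠ 1`, then, with `γ = (1+α)⁻¹`,
`E[C₁' + 2Q' | c] ≥ n (1 + Γ(c))` where
`Γ(c) = (1 - (c₁ + 2q)/n)² + 2(1-γ)(R(c) - 1)(c₁/n)²`. -/
theorem majority_drift (n k : ℕ) [NeZero n] (σ : Config n k) (i₁ : Fin k) (α : ℝ)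
    (hα : 0 < α)
    (hbias : ∀ i : Fin k, i ≠ i₁ → (1 + α) * (colorCount σ i : ℝ) ≤ (colorCount σ i₁ : ℝ)) :
    (n : ℝ) * (1 +
        ((1 - ((colorCount σ i₁ : ℝ) + 2 * (undecidedCount σ : ℝ)) / n) ^ 2 +
          2 * (1 - (1 + α)⁻¹) * (Rval σ - 1) * ((colorCount σ i₁ : ℝ) / n) ^ 2)) ≤
      expv σ (fun τ => (colorCount τ i₁ : ℝ) + 2 * (undecidedCount τ : ℝ)) := by
  have hsmall : ∀ i ≠ i₁, (colorCount σ i : ℝ) ≤ (1 + α)⁻¹ * colorCount σ i₁ := fun i hi =>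
    (le_inv_mul_iff₀ (by linarith)).2 (hbias i hi)
  have hplur : plur σ = colorCount σ i₁ := by
    refine plur_eq_colorCount σ fun i => ?_
    rcases eq_or_ne i i₁ with rfl | hi
    · rfl
    · have hγ : (1 + α)⁻¹ ≤ 1 := inv_le_one_of_one_le₀ (by linarith)
      exact_mod_cast (hsmall i hi).trans (mul_le_of_le_one_left (by positivity) hγ)
  have hR : Rval σ = (∑ i, (colorCount σ i : ℝ)) / colorCount σ i₁ := by
    rw [Rval, hplur, ← undecidedCount_add_sum_colorCount σ, add_sub_cancel_left]
  have hn : 0 < (undecidedCount σ : ℝ) + ∑ i, (colorCount σ i : ℝ) := by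
    rw [undecidedCount_add_sum_colorCount σ]
    exact_mod_cast NeZero.pos n
  rw [expv_colorCount_add_two_mul_undecidedCount, ← undecidedCount_add_sum_colorCount σ]
  exact drift_inequality_of_sum_sq_le hn hR
    (sum_sq_le_of_le_mul _ i₁ (fun _ => by positivity) hsmall)
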